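/- arXiv:0809.0740 — 2 statements merged into one kernel-verified Lean document; each statement's English description precedes it below -/
import Mathlib

section
/- Let (X, d) be a compact metric space. The functional I, restricted to the set M⁺(X) of finite positive Borel measures on X equipped with the weak-* topology, is continuous. -/
open MeasureTheory Filter Topology

/-- `dmu μ x = ∫ d(x,y) dμ(y)`, defined via the Jordan decomposition of the
finite signed Borel measure `μ`. -/
noncomputable def dmu {X : Type*} [MetricSpace X] [MeasurableSpace X]
    (μ : SignedMeasure X) (x : X) : ℝ :=
  (∫ y, dist x y ∂μ.toJordanDecomposition.posPart) -
  (∫ y, dist x y ∂μ.toJordanDecomposition.negPart)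

/-- `Ibil μ ν = ∫∫ d(x,y) dμ(x)dν(y)`. -/
noncomputable def Ibil {X : Type*} [MetricSpace X] [MeasurableSpace X]
    (μ ν : SignedMeasure X) : ℝ :=
  (∫ x, dmu ν x ∂μ.toJordanDecomposition.posPart) -
  (∫ x, dmu ν x ∂μ.toJordanDecomposition.negPart)

/-- The energy integral `I(μ) = I(μ, μ)`. -/
noncomputable def Ien {X : Type*} [MetricSpace X] [MeasurableSpace X]
    (μ : SignedMeasure X) : ℝ := Ibil μ μ

/-- Integration of a function against a signed measure, via Jordan decomposition. -/
noncomputable def integSM {X : Type*} [MeasurableSpace X] (μ : SignedMeasure X)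
    (f : X → ℝ) : ℝ :=
  (∫ x, f x ∂μ.toJordanDecomposition.posPart) -
  (∫ x, f x ∂μ.toJordanDecomposition.negPart)

/-- The weak-* topology on the space of finite signed Borel measures on `X`,
i.e. the topology induced by the maps `μ ↦ ∫ f dμ` for `f ∈ C(X, ℝ)`. -/
noncomputable def weakStar (X : Type*) [TopologicalSpace X] [MeasurableSpace X] :
    TopologicalSpace (SignedMeasure X) :=
  TopologicalSpace.induced
    (fun μ : SignedMeasure X => fun f : C(X, ℝ) => integSM μ f) inferInstance

/-! On a positive measure `μ` the Jordan decomposition is trivial, so `I(μ)` is the value at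
`d ∈ C(X × X)` of the functional `h ↦ ∫∫ h dμ dμ`, whose norm is at most `μ(X)²`. On a tensor
`f ⊗ g` it equals `(∫ f dμ) (∫ g dμ)`, a weak-* continuous function of `μ`. The mass
`μ(X) = ∫ 1 dμ` is weak-* continuous, hence locally bounded, on positive measures, so the norm bound
makes the set of `h` for which `μ ↦ ∫∫ h dμ dμ` is continuous closed; by Stone–Weierstrass the span
of the tensors is dense, so this set is all of `C(X × X)`. -/

open ContinuousMap

lemma SignedMeasure.toJordanDecomposition_negPart_eq_zero {X : Type*} [MeasurableSpace X]
    {μ : SignedMeasure X} (hμ : 0 ≤ μ) : μ.toJordanDecomposition.negPart = 0 := by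
  obtain ⟨i, hi, -, hneg, -, hν⟩ := μ.toJordanDecomposition_spec
  rw [hν]
  ext s hs
  have hle : μ (iᶜ ∩ s) ≤ 0 := by
    simpa using (VectorMeasure.restrict_le_restrict_iff μ 0 hi.compl).1 hneg
      (hi.compl.inter hs) Set.inter_subset_left
  have hge : 0 ≤ μ (iᶜ ∩ s) := by simpa using VectorMeasure.le_iff'.1 hμ (iᶜ ∩ s)
  simp [SignedMeasure.toMeasureOfLEZero_apply μ hneg hi.compl hs, le_antisymm hle hge]

section DoubleIntegral

variable {X : Type*} [TopologicalSpace X] [CompactSpace X] [MeasurableSpace X]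
  (P : Measure X) [IsFiniteMeasure P]

lemma norm_integral_integral_le (h : C(X × X, ℝ)) :
    ‖∫ x, ∫ y, h (x, y) ∂P ∂P‖ ≤ P.real Set.univ ^ 2 * ‖h‖ := by
  have norm_inner_le (x : X) : ‖∫ y, h (x, y) ∂P‖ ≤ ‖h‖ * P.real Set.univ :=
    norm_integral_le_of_norm_le_const (.of_forall fun y => h.norm_coe_le_norm (x, y))
  calc ‖∫ x, ∫ y, h (x, y) ∂P ∂P‖ ≤ ‖h‖ * P.real Set.univ * P.real Set.univ :=
        norm_integral_le_of_norm_le_const (.of_forall norm_inner_le)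
    _ = P.real Set.univ ^ 2 * ‖h‖ := by ring

variable [OpensMeasurableSpace X]

lemma Continuous.integrable_of_compactSpace {f : X → ℝ} (hf : Continuous f) : Integrable f P :=
  hf.integrable_of_hasCompactSupport (.of_compactSpace f)

variable [FirstCountableTopology X]

lemma continuous_integral_apply_prodMk (h : C(X × X, ℝ)) :
    Continuous fun x => ∫ y, h (x, y) ∂P :=
  continuous_of_dominated (bound := fun _ => ‖h‖)
    (fun x => (h.continuous.comp (.prodMk_right x)).aestronglyMeasurable)
    (fun x => .of_forall fun y => h.norm_coe_le_norm (x, y)) (integrable_const _)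
    (.of_forall fun y => h.continuous.comp (.prodMk_left y))

lemma integral_integral_add (h₁ h₂ : C(X × X, ℝ)) :
    ∫ x, ∫ y, (h₁ + h₂) (x, y) ∂P ∂P =
      ∫ x, ∫ y, h₁ (x, y) ∂P ∂P + ∫ x, ∫ y, h₂ (x, y) ∂P ∂P := by
  have integrable_inner (h : C(X × X, ℝ)) (x : X) : Integrable (fun y => h (x, y)) P :=
    (h.continuous.comp (.prodMk_right x)).integrable_of_compactSpace P
  simp only [ContinuousMap.add_apply, integral_add (integrable_inner h₁ _) (integrable_inner h₂ _)]
  exact integral_add ((continuous_integral_apply_prodMk P h₁).integrable_of_compactSpace P)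
    ((continuous_integral_apply_prodMk P h₂).integrable_of_compactSpace P)

noncomputable def doubleIntegralCLM : C(X × X, ℝ) →L[ℝ] ℝ :=
  LinearMap.mkContinuous
    { toFun := fun h => ∫ x, ∫ y, h (x, y) ∂P ∂P
      map_add' := integral_integral_add P
      map_smul' := fun c h => by simp [integral_const_mul] }
    (P.real Set.univ ^ 2) (norm_integral_integral_le P)

lemma doubleIntegralCLM_apply (h : C(X × X, ℝ)) :
    doubleIntegralCLM P h = ∫ x, ∫ y, h (x, y) ∂P ∂P := rfl

lemma norm_doubleIntegralCLM_le : ‖doubleIntegralCLM P‖ ≤ P.real Set.univ ^ 2 :=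
  LinearMap.mkContinuous_norm_le _ (by positivity) _

lemma doubleIntegralCLM_tensor (f g : C(X, ℝ)) :
    doubleIntegralCLM P (f.comp fst * g.comp snd) = (∫ x, f x ∂P) * ∫ y, g y ∂P := by
  simp only [doubleIntegralCLM_apply, ContinuousMap.mul_apply, ContinuousMap.comp_apply,
    fst_apply, snd_apply, integral_const_mul, integral_mul_const]

end DoubleIntegral

def tensorSubmonoid (X : Type*) [TopologicalSpace X] : Submonoid C(X × X, ℝ) where
  carrier := {h | ∃ f g : C(X, ℝ), h = f.comp fst * g.comp snd}
  one_mem' := ⟨1, 1, by ext; simp⟩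
  mul_mem' := by
    rintro _ _ ⟨f₁, g₁, rfl⟩ ⟨f₂, g₂, rfl⟩
    exact ⟨f₁ * f₂, g₁ * g₂, by ext; simp [mul_mul_mul_comm]⟩

lemma tensorSubmonoid_separatesPoints {X : Type*} [MetricSpace X] :
    (Algebra.adjoin ℝ (tensorSubmonoid X : Set C(X × X, ℝ))).SeparatesPoints := by
  intro p q hpq
  have tensor_mem (f g : C(X, ℝ)) : ∃ h ∈ Algebra.adjoin ℝ (tensorSubmonoid X : Set C(X × X, ℝ)),
      ⇑h = fun z => f z.1 * g z.2 :=
    ⟨_, Algebra.subset_adjoin ⟨f, g, rfl⟩, rfl⟩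
  rcases not_and_or.1 (mt Prod.ext_iff.2 hpq) with h₁ | h₂
  · obtain ⟨h, hmem, hh⟩ := tensor_mem ⟨fun z => dist z q.1, by fun_prop⟩ 1
    exact ⟨h, ⟨h, hmem, rfl⟩, by simpa [hh] using dist_ne_zero.2 h₁⟩
  · obtain ⟨h, hmem, hh⟩ := tensor_mem 1 ⟨fun z => dist z q.2, by fun_prop⟩
    exact ⟨h, ⟨h, hmem, rfl⟩, by simpa [hh] using dist_ne_zero.2 h₂⟩

lemma dense_span_tensorSubmonoid {X : Type*} [MetricSpace X] [CompactSpace X] :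
    Dense (Submodule.span ℝ (tensorSubmonoid X : Set C(X × X, ℝ)) : Set C(X × X, ℝ)) := by
  have hspan := Algebra.adjoin_eq_span_of_subset ℝ
    (s := (tensorSubmonoid X : Set C(X × X, ℝ)))
    (by rw [Submonoid.closure_eq]; exact Submodule.subset_span)
  rw [dense_iff_closure_eq, ← hspan, Subalgebra.coe_toSubmodule,
    ← Subalgebra.topologicalClosure_coe,
    ContinuousMap.subalgebra_topologicalClosure_eq_top_of_separatesPoints _
      tensorSubmonoid_separatesPoints, Algebra.coe_top]

section WeakStar

attribute [local instance] weakStar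

lemma continuous_integSM {X : Type*} [TopologicalSpace X] [MeasurableSpace X] (f : C(X, ℝ)) :
    Continuous fun μ : SignedMeasure X => integSM μ f :=
  (continuous_apply f).comp (continuous_induced_dom (f := fun μ (g : C(X, ℝ)) => integSM μ g))

variable {X : Type*} [MeasurableSpace X] {μ : SignedMeasure X}

lemma integSM_of_nonneg (hμ : 0 ≤ μ) (f : X → ℝ) :
    integSM μ f = ∫ x, f x ∂μ.toJordanDecomposition.posPart := by
  simp [integSM, SignedMeasure.toJordanDecomposition_negPart_eq_zero hμ]

lemma Ien_of_nonneg [MetricSpace X] [CompactSpace X] [OpensMeasurableSpace X] (hμ : 0 ≤ μ) :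
    Ien μ = doubleIntegralCLM μ.toJordanDecomposition.posPart
      ⟨fun p => dist p.1 p.2, continuous_dist⟩ := by
  simp [Ien, Ibil, dmu, doubleIntegralCLM_apply,
    SignedMeasure.toJordanDecomposition_negPart_eq_zero hμ]

lemma continuousOn_posPart_real_univ [TopologicalSpace X] :
    ContinuousOn (fun μ : SignedMeasure X => μ.toJordanDecomposition.posPart.real Set.univ)
      {μ | 0 ≤ μ} :=
  (continuous_integSM (1 : C(X, ℝ))).continuousOn.congr fun μ hμ => by
    simp [integSM_of_nonneg hμ]

variable [MetricSpace X] [CompactSpace X] [OpensMeasurableSpace X]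

lemma continuousOn_doubleIntegralCLM_tensor (f g : C(X, ℝ)) :
    ContinuousOn (fun μ : SignedMeasure X =>
      doubleIntegralCLM μ.toJordanDecomposition.posPart (f.comp fst * g.comp snd)) {μ | 0 ≤ μ} :=
  ((continuous_integSM f).mul (continuous_integSM g)).continuousOn.congr fun μ hμ => by
    simp only [doubleIntegralCLM_tensor, Pi.mul_apply, integSM_of_nonneg hμ]

lemma isClosed_setOf_continuousOn_doubleIntegralCLM :
    IsClosed {h : C(X × X, ℝ) | ContinuousOn (fun μ : SignedMeasure X =>
      doubleIntegralCLM μ.toJordanDecomposition.posPart h) {μ | 0 ≤ μ}} := by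
  refine isClosed_of_closure_subset fun h hh μ₀ hμ₀ => ?_
  refine continuousWithinAt_of_locally_uniform_approx_of_continuousWithinAt hμ₀ fun u hu => ?_
  obtain ⟨ε, hε, hεu⟩ := Metric.mem_uniformity_dist.1 hu
  set B := μ₀.toJordanDecomposition.posPart.real Set.univ + 1
  have hB : 0 < B := by positivity
  obtain ⟨g, hg, hhg⟩ := Metric.mem_closure_iff.1 hh (ε / B ^ 2) (by positivity)
  refine ⟨{μ | μ.toJordanDecomposition.posPart.real Set.univ < B}, ?_, _, hg μ₀ hμ₀,
    fun μ (hμ : _ < B) => hεu ?_⟩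
  · exact (continuousOn_posPart_real_univ μ₀ hμ₀).eventually_lt continuousWithinAt_const
      (lt_add_one _)
  set J := doubleIntegralCLM μ.toJordanDecomposition.posPart
  calc dist (J h) (J g) = ‖J (h - g)‖ := by rw [dist_eq_norm, map_sub]
    _ ≤ ‖J‖ * ‖h - g‖ := J.le_opNorm _
    _ ≤ B ^ 2 * ‖h - g‖ := by
      gcongr
      exact (norm_doubleIntegralCLM_le _).trans (by gcongr)
    _ < B ^ 2 * (ε / B ^ 2) := by gcongr; rwa [← dist_eq_norm]
    _ = ε := by field_simp

lemma continuousOn_doubleIntegralCLM (h : C(X × X, ℝ)) :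
    ContinuousOn (fun μ : SignedMeasure X =>
      doubleIntegralCLM μ.toJordanDecomposition.posPart h) {μ | 0 ≤ μ} := by
  have span_subset : (Submodule.span ℝ (tensorSubmonoid X : Set C(X × X, ℝ)) : Set _) ⊆
      {h | ContinuousOn (fun μ : SignedMeasure X =>
        doubleIntegralCLM μ.toJordanDecomposition.posPart h) {μ | 0 ≤ μ}} := by
    intro h hh
    induction hh using Submodule.span_induction with
    | mem h hmem =>
      obtain ⟨f, g, rfl⟩ := hmem
      exact continuousOn_doubleIntegralCLM_tensor f g
    | zero => simpa using continuousOn_const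
    | add h₁ h₂ _ _ ih₁ ih₂ => exact (ih₁.add ih₂).congr fun μ _ => map_add _ _ _
    | smul c h _ ih => exact (ih.const_smul c).congr fun μ _ => map_smul _ _ _
  refine closure_minimal span_subset isClosed_setOf_continuousOn_doubleIntegralCLM ?_
  rw [dense_span_tensorSubmonoid.closure_eq]
  trivial

end WeakStar

/-- The functional `I`, restricted to the set of positive finite Borel measures
with the (subspace) weak-* topology, is continuous. -/
theorem stmt_9 {X : Type*} [MetricSpace X] [CompactSpace X]
    [MeasurableSpace X] [BorelSpace X] :
    @ContinuousOn (SignedMeasure X) ℝ (weakStar X) _ Ien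
      {μ : SignedMeasure X | 0 ≤ μ} :=
  @ContinuousOn.congr _ _ (weakStar X) _ _ _ _ (continuousOn_doubleIntegralCLM _)
    fun _ hμ => Ien_of_nonneg hμ
end

section
/- Let (X, d) be an infinite compact metric space. Then the restriction of the functional I to the subspace M_0(X) of finite signed Borel measures of total mass 0, equipped with the subspace weak-* topology, is discontinuous at every point of M_0(X). -/
/-!
Weak-* neighbourhoods only see finitely many test functions `f₁, …, fₖ`. So it suffices to find a
mass-zero measure `τ` with `∫ fᵢ dτ = 0` for all `i` and `I(τ) < 0`: then `μ + sτ` stays in the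
neighbourhood while `I(μ + sτ)` is a quadratic polynomial in `s` with leading coefficient `I(τ)`.

Since `X` is infinite and compact, it has an accumulation point `p`, and we pick points `wⱼ ≠ p`
with `d(wⱼ₊₁, p) ≤ η² d(wⱼ, p)`, where `η = 1 / (2(k + 1))`. On the dipoles
`τ = ∑ cⱼ (δ_{wⱼ} - δ_p)`, `I` is the quadratic form with coefficients
`d(wⱼ, wₗ) - d(wⱼ, p) - d(wₗ, p)`: the diagonal is `-2 d(wⱼ, p)`, and the rapid decay makes the
off-diagonal part at most half as large, so the form is negative definite. With `k + 1` dipoles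
some `c ≠ 0` annihilates all the `fᵢ`.
-/

open MeasureTheory Filter Topology

section MeasurableSpace

variable {X : Type*} [MeasurableSpace X]

lemma integSM_one (ν : SignedMeasure X) : integSM ν 1 = ν Set.univ := by
  have h := congrArg (fun ρ : SignedMeasure X => ρ Set.univ)
    ν.toSignedMeasure_toJordanDecomposition
  simp only [JordanDecomposition.toSignedMeasure, FunLike.coe_sub, Pi.sub_apply,
    Measure.toSignedMeasure_apply_measurable MeasurableSet.univ] at h
  simp [integSM, ← h, measureReal_def]

lemma integSM_smul_left (r : ℝ) (ν : SignedMeasure X) (f : X → ℝ) :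
    integSM (r • ν) f = r * integSM ν f := by
  simp only [integSM, SignedMeasure.toJordanDecomposition_smul_real]
  rcases lt_or_ge r 0 with hr | hr
  · rw [JordanDecomposition.real_smul_posPart_neg _ _ hr,
      JordanDecomposition.real_smul_negPart_neg _ _ hr, integral_smul_nnreal_measure,
      integral_smul_nnreal_measure, NNReal.smul_def, NNReal.smul_def,
      Real.coe_toNNReal _ (by linarith)]
    simp only [smul_eq_mul]
    ring
  · rw [JordanDecomposition.real_smul_posPart_nonneg _ _ hr,
      JordanDecomposition.real_smul_negPart_nonneg _ _ hr, integral_smul_nnreal_measure,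
      integral_smul_nnreal_measure, NNReal.smul_def, NNReal.smul_def, Real.coe_toNNReal _ hr]
    simp only [smul_eq_mul]
    ring

lemma integSM_smul_right (ν : SignedMeasure X) (r : ℝ) (f : X → ℝ) :
    integSM ν (r • f) = r * integSM ν f := by
  simp only [integSM, Pi.smul_apply, smul_eq_mul, integral_const_mul]
  ring

noncomputable def dipoles {ι : Type*} [Fintype ι] (p : X) (w : ι → X) (c : ι → ℝ) :
    SignedMeasure X :=
  ∑ j, c j • ((Measure.dirac (w j)).toSignedMeasure - (Measure.dirac p).toSignedMeasure)

end MeasurableSpace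

section CompactSpace

variable {X : Type*} [TopologicalSpace X] [CompactSpace X] [MeasurableSpace X]
  [OpensMeasurableSpace X]

lemma ContinuousMap.integrable_of_compactSpace (f : C(X, ℝ)) (P : Measure X)
    [IsFiniteMeasure P] : Integrable f P :=
  (BoundedContinuousFunction.mkOfCompact f).integrable P

lemma integSM_eq_integral_sub_integral {ν : SignedMeasure X} {P Q : Measure X}
    [IsFiniteMeasure P] [IsFiniteMeasure Q] (hν : ν = P.toSignedMeasure - Q.toSignedMeasure)
    (f : C(X, ℝ)) : integSM ν f = (∫ x, f x ∂P) - ∫ x, f x ∂Q := by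
  set j := ν.toJordanDecomposition
  have hsum : j.posPart + Q = P + j.negPart := by
    rw [← Measure.toSignedMeasure_eq_toSignedMeasure_iff, Measure.toSignedMeasure_add,
      Measure.toSignedMeasure_add, ← sub_eq_sub_iff_add_eq_add, ← hν]
    exact ν.toSignedMeasure_toJordanDecomposition
  have hint : ∫ x, f x ∂(j.posPart + Q) = ∫ x, f x ∂(P + j.negPart) := by rw [hsum]
  simp only [integral_add_measure (f.integrable_of_compactSpace _)
    (f.integrable_of_compactSpace _)] at hint
  rw [integSM]
  linarith

lemma integSM_add_left (ν₁ ν₂ : SignedMeasure X) (f : C(X, ℝ)) :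
    integSM (ν₁ + ν₂) f = integSM ν₁ f + integSM ν₂ f := by
  set j₁ := ν₁.toJordanDecomposition
  set j₂ := ν₂.toJordanDecomposition
  have hν : ν₁ + ν₂ = (j₁.posPart + j₂.posPart).toSignedMeasure
      - (j₁.negPart + j₂.negPart).toSignedMeasure := by
    rw [Measure.toSignedMeasure_add, Measure.toSignedMeasure_add,
      ← ν₁.toSignedMeasure_toJordanDecomposition, ← ν₂.toSignedMeasure_toJordanDecomposition]
    simp only [JordanDecomposition.toSignedMeasure, j₁, j₂]
    abel
  rw [integSM_eq_integral_sub_integral hν, integral_add_measure (f.integrable_of_compactSpace _)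
    (f.integrable_of_compactSpace _), integral_add_measure (f.integrable_of_compactSpace _)
    (f.integrable_of_compactSpace _), integSM, integSM]
  ring

lemma integSM_add_right (ν : SignedMeasure X) (f g : C(X, ℝ)) :
    integSM ν ⇑(f + g) = integSM ν f + integSM ν g := by
  simp only [integSM, ContinuousMap.coe_add, Pi.add_apply]
  rw [integral_add (f.integrable_of_compactSpace _) (g.integrable_of_compactSpace _),
    integral_add (f.integrable_of_compactSpace _) (g.integrable_of_compactSpace _)]
  ring

noncomputable def integSMₗ : SignedMeasure X →ₗ[ℝ] C(X, ℝ) →ₗ[ℝ] ℝ :=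
  LinearMap.mk₂ ℝ (fun ν f => integSM ν f) integSM_add_left
    (fun r ν f => integSM_smul_left r ν f) integSM_add_right
    (fun r ν f => integSM_smul_right ν r f)

@[simp]
lemma integSMₗ_apply (ν : SignedMeasure X) (f : C(X, ℝ)) : integSMₗ ν f = integSM ν f := rfl

lemma integSM_dirac [T1Space X] (x : X) (f : C(X, ℝ)) :
    integSM (Measure.dirac x).toSignedMeasure f = f x := by
  rw [integSM_eq_integral_sub_integral (P := Measure.dirac x) (Q := 0)
    (by rw [Measure.toSignedMeasure_zero, sub_zero]), integral_dirac, integral_zero_measure,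
    sub_zero]

end CompactSpace

section MetricSpace

variable {X : Type*} [MetricSpace X] [CompactSpace X] [MeasurableSpace X] [BorelSpace X]

lemma continuous_dmu (ν : SignedMeasure X) : Continuous (dmu ν) := by
  have h : ∀ P : Measure X, [IsFiniteMeasure P] → Continuous fun x => ∫ y, dist x y ∂P := by
    intro P _
    simpa only [Measure.restrict_univ] using
      continuous_parametric_integral_of_continuous (μ := P) continuous_dist isCompact_univ
  exact (h _).sub (h _)

noncomputable def dmuₗ : SignedMeasure X →ₗ[ℝ] C(X, ℝ) where
  toFun ν := ⟨dmu ν, continuous_dmu ν⟩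
  map_add' ν₁ ν₂ := ContinuousMap.ext fun x =>
    integSM_add_left ν₁ ν₂ ⟨dist x, continuous_const.dist continuous_id⟩
  map_smul' r ν := ContinuousMap.ext fun _ => integSM_smul_left r ν _

@[simp]
lemma dmuₗ_apply (ν : SignedMeasure X) (x : X) : dmuₗ ν x = dmu ν x := rfl

lemma Ien_eq_integSMₗ (ν : SignedMeasure X) : Ien ν = integSMₗ ν (dmuₗ ν) := rfl

lemma Ien_add_smul (μ τ : SignedMeasure X) (s : ℝ) :
    Ien (μ + s • τ) =
      Ien μ + s * (integSMₗ μ (dmuₗ τ) + integSMₗ τ (dmuₗ μ)) + s ^ 2 * Ien τ := by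
  simp only [Ien_eq_integSMₗ, map_add, map_smul, LinearMap.add_apply, LinearMap.smul_apply,
    smul_eq_mul]
  ring

variable {ι : Type*} [Fintype ι] (p : X) (w : ι → X) (c : ι → ℝ)

lemma integSM_dipoles (f : C(X, ℝ)) :
    integSM (dipoles p w c) f = ∑ j, c j * (f (w j) - f p) := by
  rw [dipoles, ← integSMₗ_apply, map_sum, LinearMap.sum_apply]
  simp only [map_smul, map_sub, LinearMap.smul_apply, LinearMap.sub_apply, integSMₗ_apply,
    integSM_dirac, smul_eq_mul]

lemma dipoles_univ : dipoles p w c Set.univ = 0 := by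
  rw [← integSM_one]
  simpa using integSM_dipoles p w c 1

lemma Ien_dipoles : Ien (dipoles p w c) =
    ∑ j, ∑ l, c j * c l * (dist (w j) (w l) - dist (w j) p - dist (w l) p) := by
  have hdmu (x : X) : dmu (dipoles p w c) x = ∑ l, c l * (dist x (w l) - dist x p) :=
    integSM_dipoles p w c ⟨dist x, continuous_const.dist continuous_id⟩
  rw [Ien_eq_integSMₗ, integSMₗ_apply, integSM_dipoles]
  simp only [dmuₗ_apply, hdmu, dist_self, ← Finset.sum_sub_distrib, Finset.mul_sum]
  refine Finset.sum_congr rfl fun j _ => Finset.sum_congr rfl fun l _ => ?_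
  rw [dist_comm p (w l)]
  ring

end MetricSpace

lemma mul_mul_le_of_abs_le_two_mul {x y u v b η : ℝ} (hη : 0 < η) (hv : 0 ≤ v)
    (hvu : v ≤ η ^ 2 * u) (hb : |b| ≤ 2 * v) : x * y * b ≤ η * (x ^ 2 * u + y ^ 2 * v) := by
  have hxyb : x * y * b ≤ 2 * (|x| * |y|) * v := by
    calc x * y * b ≤ |x| * |y| * |b| := by rw [← abs_mul, ← abs_mul]; exact le_abs_self _
      _ ≤ |x| * |y| * (2 * v) := by gcongr
      _ = 2 * (|x| * |y|) * v := by ring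
  have hamgm : 2 * (|x| * |y|) * η ≤ x ^ 2 + η ^ 2 * y ^ 2 := by
    nlinarith [sq_nonneg (|x| - η * |y|), sq_abs x, sq_abs y]
  nlinarith [mul_le_mul_of_nonneg_left hvu (sq_nonneg x), mul_le_mul_of_nonneg_right hamgm hv]

lemma sum_sum_mul_le_neg_of_decay {ι : Type*} [Fintype ι] [LinearOrder ι] (c Δ : ι → ℝ)
    (b : ι → ι → ℝ) {η : ℝ} (hη : 0 < η) (hcard : 2 * Fintype.card ι * η ≤ 1)
    (hΔ : ∀ j, 0 ≤ Δ j) (hdecay : ∀ j l, j < l → Δ l ≤ η ^ 2 * Δ j)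
    (hdiag : ∀ j, b j j = -2 * Δ j) (hoff : ∀ j l, |b j l| ≤ 2 * min (Δ j) (Δ l)) :
    ∑ j, ∑ l, c j * c l * b j l ≤ -∑ j, c j ^ 2 * Δ j := by
  set a : ι → ℝ := fun j => c j ^ 2 * Δ j
  have ha (j : ι) : 0 ≤ a j := mul_nonneg (sq_nonneg _) (hΔ j)
  -- the `if` carries the diagonal `-2 a j`; the rest of the bound also holds for `j = l`
  have hentry (j l : ι) :
      c j * c l * b j l ≤ η * (a j + a l) - if j = l then 2 * a j else 0 := by
    rcases lt_trichotomy j l with hjl | rfl | hlj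
    · simpa [hjl.ne] using mul_mul_le_of_abs_le_two_mul hη (hΔ l) (hdecay j l hjl)
        ((hoff j l).trans (by gcongr; exact min_le_right _ _))
    · simp only [hdiag, if_true, a]
      nlinarith [ha j]
    · have := mul_mul_le_of_abs_le_two_mul (x := c l) (y := c j) hη (hΔ j) (hdecay l j hlj)
        ((hoff j l).trans (by gcongr; exact min_le_left _ _))
      simp only [hlj.ne', if_false, sub_zero, a]
      linarith
  calc ∑ j, ∑ l, c j * c l * b j l
      ≤ ∑ j, ∑ l, (η * (a j + a l) - if j = l then 2 * a j else 0) :=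
        Finset.sum_le_sum fun j _ => Finset.sum_le_sum fun l _ => hentry j l
    _ = 2 * Fintype.card ι * η * ∑ j, a j - 2 * ∑ j, a j := by
        simp only [Finset.sum_sub_distrib, Finset.sum_ite_eq, Finset.mem_univ, if_true,
          ← Finset.mul_sum, Finset.sum_add_distrib, Finset.sum_const, Finset.card_univ,
          nsmul_eq_mul]
        ring
    _ ≤ -∑ j, a j := by nlinarith [Finset.sum_nonneg fun j (_ : j ∈ Finset.univ) => ha j]

lemma exists_ne_zero_forall_sum_mul_eq_zero {α ι : Type*} [Fintype ι] (I : Finset α)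
    (v : α → ι → ℝ) (hI : I.card < Fintype.card ι) :
    ∃ c : ι → ℝ, c ≠ 0 ∧ ∀ f ∈ I, ∑ j, c j * v f j = 0 := by
  set L := (Matrix.of fun (f : I) j => v f j).mulVecLin
  have hker : LinearMap.ker L ≠ ⊥ :=
    LinearMap.ker_ne_bot_of_finrank_lt (by simpa [Module.finrank_fintype_fun_eq_card] using hI)
  obtain ⟨c, hc, hc0⟩ := (Submodule.ne_bot_iff _).1 hker
  refine ⟨c, hc0, fun f hf => ?_⟩
  simpa [L, Matrix.mulVec, dotProduct, mul_comm] using congrFun hc ⟨f, hf⟩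

lemma exists_mul_add_mul_sq_le_neg_one {a b : ℝ} (ha : a < 0) :
    ∃ s : ℝ, s * b + s ^ 2 * a ≤ -1 := by
  refine ⟨max 1 ((|b| + 1) / -a), ?_⟩
  set s := max 1 ((|b| + 1) / -a)
  have hs : 1 ≤ s := le_max_left _ _
  have hsa : |b| + 1 ≤ s * -a := (div_le_iff₀ (by linarith)).1 (le_max_right _ _)
  nlinarith [le_abs_self b]

lemma abs_dist_sub_dist_sub_dist_le {X : Type*} [MetricSpace X] (x y p : X) :
    |dist x y - dist x p - dist y p| ≤ 2 * min (dist x p) (dist y p) := by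
  have h₁ := dist_triangle_right x y p
  have h₂ := dist_triangle_left x p y
  have h₃ := dist_triangle_left y p x
  rw [dist_comm y x] at h₂
  rw [abs_le]
  constructor
  · rcases min_cases (dist x p) (dist y p) with ⟨h, -⟩ | ⟨h, -⟩ <;> rw [h] <;> linarith
  · linarith [le_min (dist_nonneg (x := x) (y := p)) (dist_nonneg (x := y) (y := p))]

lemma exists_seq_dist_le_mul_dist {X : Type*} [MetricSpace X] {p : X} [(𝓝[≠] p).NeBot]
    {ε : ℝ} (hε : 0 < ε) :
    ∃ w : ℕ → X, ∀ n, w n ≠ p ∧ dist (w (n + 1)) p ≤ ε * dist (w n) p := by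
  have hclose {r : ℝ} (hr : 0 < r) : ∃ y, y ≠ p ∧ dist y p < r := by
    obtain ⟨y, hyp, hy⟩ :=
      Filter.nonempty_of_mem (inter_mem_nhdsWithin {p}ᶜ (Metric.ball_mem_nhds p hr))
    exact ⟨y, hyp, hy⟩
  have step (x : {x : X // x ≠ p}) :
      ∃ y : {y : X // y ≠ p}, dist (y : X) p ≤ ε * dist (x : X) p := by
    obtain ⟨y, hyp, hy⟩ := hclose (mul_pos hε (dist_pos.2 x.2))
    exact ⟨⟨y, hyp⟩, hy.le⟩
  choose g hg using step
  obtain ⟨x₀, hx₀, -⟩ := hclose one_pos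
  refine ⟨fun n => (g^[n] ⟨x₀, hx₀⟩ : X), fun n => ⟨(g^[n] _).2, ?_⟩⟩
  simpa only [Function.iterate_succ_apply'] using hg _

lemma exists_integSM_eq_zero_Ien_neg {X : Type*} [MetricSpace X] [CompactSpace X]
    [MeasurableSpace X] [BorelSpace X] [Infinite X] (I : Finset C(X, ℝ)) :
    ∃ τ : SignedMeasure X, τ Set.univ = 0 ∧ (∀ f ∈ I, integSM τ f = 0) ∧ Ien τ < 0 := by
  obtain ⟨p, hp⟩ := exists_nhds_ne_neBot X
  set η : ℝ := (2 * (I.card + 1 : ℝ))⁻¹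
  have hη : 0 < η := by positivity
  have hcard : 2 * Fintype.card (Fin (I.card + 1)) * η ≤ 1 := by
    simp only [Fintype.card_fin, Nat.cast_add, Nat.cast_one, η]
    rw [mul_inv_cancel₀ (by positivity)]
  have hη₁ : η ^ 2 ≤ 1 := pow_le_one₀ hη.le (inv_le_one_of_one_le₀ (by linarith))
  obtain ⟨w, hw⟩ := exists_seq_dist_le_mul_dist (p := p) (pow_pos hη 2)
  have hanti : Antitone fun n => dist (w n) p :=
    antitone_nat_of_succ_le fun n => (hw n).2.trans (mul_le_of_le_one_left dist_nonneg hη₁)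
  set W : Fin (I.card + 1) → X := fun j => w j
  obtain ⟨c, hc0, hcI⟩ := exists_ne_zero_forall_sum_mul_eq_zero I
    (fun f j => f (W j) - f p) (by simp)
  refine ⟨dipoles p W c, dipoles_univ p W c,
    fun f hf => (integSM_dipoles p W c f).trans (hcI f hf), ?_⟩
  obtain ⟨j₀, hj₀⟩ := Function.ne_iff.1 hc0
  have hΔ (j : Fin (I.card + 1)) : 0 < dist (W j) p := dist_pos.2 (hw j).1
  calc Ien (dipoles p W c)
      = ∑ j, ∑ l, c j * c l * (dist (W j) (W l) - dist (W j) p - dist (W l) p) :=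
        Ien_dipoles p W c
    _ ≤ -∑ j, c j ^ 2 * dist (W j) p :=
        sum_sum_mul_le_neg_of_decay c _ _ hη hcard (fun j => (hΔ j).le)
          (fun j l hjl => (hanti (Nat.succ_le_of_lt hjl)).trans (hw j).2)
          (fun j => by simp only [dist_self]; ring)
          (fun j l => abs_dist_sub_dist_sub_dist_le _ _ _)
    _ < 0 := neg_neg_of_pos <| Finset.sum_pos' (fun j _ => by have := hΔ j; positivity)
        ⟨j₀, Finset.mem_univ _, mul_pos (pow_pos (abs_pos.2 hj₀) 2 |>.trans_eq (sq_abs _)) (hΔ j₀)⟩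

lemma exists_finset_forall_integSM_eq_mem {X : Type*} [TopologicalSpace X] [MeasurableSpace X]
    {μ : SignedMeasure X} {U : Set (SignedMeasure X)} (hU : U ∈ @nhds _ (weakStar X) μ) :
    ∃ I : Finset C(X, ℝ), ∀ ν, (∀ f ∈ I, integSM ν f = integSM μ f) → ν ∈ U := by
  rw [weakStar, nhds_induced, nhds_pi] at hU
  obtain ⟨V, hV, hVU⟩ := Filter.mem_comap.1 hU
  obtain ⟨I, hI, t, ht, hIt⟩ := Filter.mem_pi.1 hV
  refine ⟨hI.toFinset, fun ν hν => hVU (hIt fun f hf => ?_)⟩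
  change integSM ν f ∈ t f
  rw [hν f (hI.mem_toFinset.2 hf)]
  exact mem_of_mem_nhds (ht f)

/-- On an infinite compact metric space, the restriction of `I` to `M₀(X)`
(with the subspace weak-* topology) is discontinuous at every point. -/
theorem stmt_11 {X : Type*} [MetricSpace X] [CompactSpace X]
    [MeasurableSpace X] [BorelSpace X] [Infinite X]
    (μ : SignedMeasure X) (hμ : μ Set.univ = 0) :
    ¬ @ContinuousWithinAt (SignedMeasure X) ℝ (weakStar X) _ Ien
        {ν : SignedMeasure X | ν Set.univ = 0} μ := by
  intro hcont
  obtain ⟨U, hU, hUsub⟩ := (@mem_nhdsWithin_iff_exists_mem_nhds_inter _ (weakStar X) _ _ _).1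
    (hcont (Metric.ball_mem_nhds (Ien μ) one_pos))
  obtain ⟨I, hI⟩ := exists_finset_forall_integSM_eq_mem hU
  obtain ⟨τ, hτ, hτI, hτneg⟩ := exists_integSM_eq_zero_Ien_neg I
  obtain ⟨s, hs⟩ := exists_mul_add_mul_sq_le_neg_one
    (b := integSMₗ μ (dmuₗ τ) + integSMₗ τ (dmuₗ μ)) hτneg
  have hmem : μ + s • τ ∈ U ∩ {ν | ν Set.univ = 0} := by
    refine ⟨hI _ fun f hf => ?_, ?_⟩
    · rw [← integSMₗ_apply, map_add, map_smul]
      simp [hτI f hf]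
    · simp [hμ, hτ]
  have hball := hUsub hmem
  rw [Set.mem_preimage, Metric.mem_ball, Real.dist_eq, Ien_add_smul] at hball
  linarith [(abs_lt.1 hball).1]
end
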